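/- arXiv:2507.13266 — 2 statements merged into one kernel-verified Lean document; each statement's English description precedes it below -/
import Mathlib

section
/- Let S be a finite nonempty type, let θ : S → ℝ, and let μ_θ(s) = exp(θ_s)/Σ_{s'} exp(θ_{s'}) be the softmax policy. Let s⁽¹⁾, …, s⁽ᴺ⁾ ∈ S be samples and let A ⊆ S be nonempty. Define PG(s) = (1/N) Σ_{i=1}^{N} 1[s⁽ⁱ⁾ ∈ A] · (1[s⁽ⁱ⁾ = s] − μ_θ(s)). If at least one sample lies in A and Σ_{s ∈ A} μ_θ(s) < 1, then there exists η₀ > 0 such that for every step size η ≥ η₀ the updated parameters θ' = θ + η·PG satisfy Σ_{s ∈ A} μ_{θ'}(s) ≥ 0.99. -/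
/-- one policy-gradient step with a sufficiently large step size places
at least `0.99` of the softmax policy's mass on the target set `A`, provided at least
one sample lay in `A` and the current mass of `A` is `< 1`. -/
theorem one_step_policy_gradient_concentrates
    (S : Type*) [Fintype S] [Nonempty S] [DecidableEq S]
    (θ : S → ℝ)
    (μ : S → ℝ)
    (hμ : ∀ s, μ s = Real.exp (θ s) / ∑ s' : S, Real.exp (θ s'))
    (N : ℕ) (samples : Fin N → S) (A : Finset S) (hA : A.Nonempty)
    (hhit : ∃ i, samples i ∈ A)
    (hmass : ∑ s ∈ A, μ s < 1)
    (PG : S → ℝ)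
    (hPG : ∀ s, PG s = (1 / (N : ℝ)) * ∑ i : Fin N,
        (if samples i ∈ A then (1 : ℝ) else 0) *
        ((if samples i = s then (1 : ℝ) else 0) - μ s)) :
    ∃ η₀ > (0 : ℝ), ∀ η ≥ η₀,
      (∑ s ∈ A,
        Real.exp (θ s + η * PG s) / ∑ s' : S, Real.exp (θ s' + η * PG s')) ≥ 0.99 := by
  classical
  obtain ⟨i0, hi0⟩ := hhit
  have hN : (0:ℝ) < N := by
    have : 0 < N := i0.pos
    exact_mod_cast this
  set K : ℝ := ∑ i : Fin N, (if samples i ∈ A then (1:ℝ) else 0) with hK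
  have hK1 : (1:ℝ) ≤ K := by
    have h := Finset.single_le_sum (f := fun i : Fin N => (if samples i ∈ A then (1:ℝ) else 0))
      (fun i _ => by positivity) (Finset.mem_univ i0)
    rw [hK]
    exact le_trans (le_of_eq (if_pos hi0).symm) h
  -- sum of PG over A
  have hsumA : ∑ s ∈ A, PG s = (1 / (N:ℝ)) * K * (1 - ∑ s ∈ A, μ s) := by
    simp only [hPG]
    rw [← Finset.mul_sum, Finset.sum_comm, mul_assoc]
    congr 1
    rw [hK, Finset.sum_mul]
    apply Finset.sum_congr rfl
    intro i _
    by_cases h : samples i ∈ A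
    · simp only [h, if_true, one_mul]
      rw [Finset.sum_sub_distrib]
      rw [Finset.sum_ite_eq A (samples i) (fun _ => (1:ℝ))]
      simp [h]
    · simp [h]
  have hsumApos : 0 < ∑ s ∈ A, PG s := by
    rw [hsumA]
    have : 0 < 1 - ∑ s ∈ A, μ s := by linarith
    positivity
  obtain ⟨sstar, hsA, hstar⟩ : ∃ s ∈ A, 0 < PG s := by
    by_contra h
    push_neg at h
    have : ∑ s ∈ A, PG s ≤ 0 := Finset.sum_nonpos h
    linarith
  -- PG nonpositive outside A
  have hμnn : ∀ s, 0 ≤ μ s := by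
    intro s
    rw [hμ]
    have : 0 < ∑ s' : S, Real.exp (θ s') :=
      Finset.sum_pos (fun s' _ => Real.exp_pos _) Finset.univ_nonempty
    positivity
  have hout : ∀ s ∉ A, PG s ≤ 0 := by
    intro s hs
    rw [hPG]
    apply mul_nonpos_of_nonneg_of_nonpos
    · positivity
    · apply Finset.sum_nonpos
      intro i _
      by_cases h : samples i ∈ A
      · have hne : samples i ≠ s := fun he => hs (he ▸ h)
        simp only [h, if_true, hne, if_false, one_mul]
        linarith [hμnn s]
      · simp [h]
  -- max of θ
  set M : ℝ := Finset.univ.sup' Finset.univ_nonempty θ with hMdef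
  have hM : ∀ s, θ s ≤ M := fun s => Finset.le_sup' θ (Finset.mem_univ s)
  set δ : ℝ := PG sstar with hδdef
  set c : ℝ := (Fintype.card S : ℝ) with hc
  have hc1 : (1:ℝ) ≤ c := by
    have : 1 ≤ Fintype.card S := Fintype.card_pos
    rw [hc]; exact_mod_cast this
  refine ⟨max 1 (Real.log (100 * c * Real.exp (M - θ sstar)) / δ),
    lt_of_lt_of_le one_pos (le_max_left _ _), ?_⟩
  intro η hη
  have hη1 : (1:ℝ) ≤ η := le_trans (le_max_left _ _) hη
  have hη0 : 0 ≤ η := by linarith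
  have hexpbig : 100 * c * Real.exp (M - θ sstar) ≤ Real.exp (η * δ) := by
    have hlog : Real.log (100 * c * Real.exp (M - θ sstar)) / δ ≤ η :=
      le_trans (le_max_right _ _) hη
    have h2 : Real.log (100 * c * Real.exp (M - θ sstar)) ≤ η * δ := by
      rw [div_le_iff₀ hstar] at hlog
      linarith
    calc 100 * c * Real.exp (M - θ sstar)
        = Real.exp (Real.log (100 * c * Real.exp (M - θ sstar))) := by
          rw [Real.exp_log]; positivity
      _ ≤ Real.exp (η * δ) := Real.exp_le_exp.mpr h2
  -- bound on outside sum
  set E : S → ℝ := fun s => Real.exp (θ s + η * PG s) with hE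
  have houtsum : ∑ s ∈ Finset.univ \ A, E s ≤ c * Real.exp M := by
    calc ∑ s ∈ Finset.univ \ A, E s
        ≤ ∑ s ∈ Finset.univ \ A, Real.exp M := by
          apply Finset.sum_le_sum
          intro s hs
          have hsA' : s ∉ A := (Finset.mem_sdiff.mp hs).2
          apply Real.exp_le_exp.mpr
          have : η * PG s ≤ 0 := mul_nonpos_of_nonneg_of_nonpos hη0 (hout s hsA')
          linarith [hM s]
      _ = ((Finset.univ \ A).card : ℝ) * Real.exp M := by rw [Finset.sum_const, nsmul_eq_mul]
      _ ≤ c * Real.exp M := by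
          apply mul_le_mul_of_nonneg_right _ (Real.exp_pos M).le
          rw [hc]
          exact_mod_cast Finset.card_le_card (Finset.subset_univ _) |>.trans (le_of_eq (Finset.card_univ))
  have hstarbound : c * Real.exp M ≤ 0.01 * E sstar := by
    have : E sstar = Real.exp (θ sstar) * Real.exp (η * δ) := by
      rw [hE]; simp only []
      rw [← Real.exp_add]
    rw [this]
    calc c * Real.exp M = 0.01 * Real.exp (θ sstar) * (100 * c * Real.exp (M - θ sstar)) := by
          rw [Real.exp_sub]
          field_simp
          ring
      _ ≤ 0.01 * Real.exp (θ sstar) * Real.exp (η * δ) := by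
          apply mul_le_mul_of_nonneg_left hexpbig
          positivity
      _ = 0.01 * (Real.exp (θ sstar) * Real.exp (η * δ)) := by ring
  have hstarle : E sstar ≤ ∑ s ∈ A, E s :=
    Finset.single_le_sum (f := E) (fun s _ => (Real.exp_pos _).le) hsA
  have hApos : 0 < ∑ s ∈ A, E s :=
    Finset.sum_pos (fun s _ => Real.exp_pos _) hA
  have houtA : ∑ s ∈ Finset.univ \ A, E s ≤ 0.01 * ∑ s ∈ A, E s := by
    calc ∑ s ∈ Finset.univ \ A, E s ≤ 0.01 * E sstar := houtsum.trans hstarbound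
      _ ≤ 0.01 * ∑ s ∈ A, E s := by linarith
  have hsplit : ∑ s' : S, E s' = ∑ s ∈ Finset.univ \ A, E s + ∑ s ∈ A, E s :=
    (Finset.sum_sdiff (Finset.subset_univ A)).symm
  have hTpos : 0 < ∑ s' : S, E s' :=
    Finset.sum_pos (fun s _ => Real.exp_pos _) Finset.univ_nonempty
  rw [ge_iff_le, ← Finset.sum_div, le_div_iff₀ hTpos]
  rw [hsplit]
  linarith
end

section
/- Let Q and S be finite nonempty types, let θ : S × Q → ℝ, and for each q ∈ Q let μ_θ(s|q) = exp(θ_{s,q})/Σ_{s' ∈ S} exp(θ_{s',q}) be the softmax policy. Fix δ' ∈ (0, 1]. Suppose that for each q ∈ Q there are a solution set 𝒮(q) ⊆ S with Σ_{s ∈ 𝒮(q)} μ_θ(s|q) < 1, a hint set h_q ⊆ S with Σ_{s ∈ h_q} μ_θ(s|q) ≥ δ', and an element s_q ∈ h_q ∩ 𝒮(q) with μ_θ(s_q|q) ≥ δ' · Σ_{s ∈ h_q} μ_θ(s|q). For each q, draw N ≥ ln(100·|Q|)/δ' independent samples from the distribution μ_θ(·|q) conditioned on h_q, independently across q. Then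 with probability at least 0.99 the following holds: for every q the sampled set S_q^{found} = {sampled s : s ∈ 𝒮(q)} is nonempty, and there exists a step size η > 0 such that the parameters θ' defined column-wise by θ'_{s,q} = θ_{s,q} + η · PG_q(s), where PG_q(s) = (1/N) Σ_{i=1}^{N} 1[s_q⁽ⁱ⁾ ∈ 𝒮(q)] · (1[s_q⁽ⁱ⁾ = s] − μ_θ(s|q)) and s_q⁽¹⁾, …, s_q⁽ᴺ⁾ are the samples for question q, satisfy Σ_{s ∈ 𝒮(q)} μ_{θ'}(s|q) ≥ 0.99 for every q ∈ Q, and hence E_{q ∼ Uniform(Q)}[ P_{s ∼ μ_{θ'}(·|q)}(s ∈ 𝒮(q)) ] ≥ 0.99. -/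
/-- The empirical policy gradient for question `q` at coordinate `s`, computed from
the samples `ω q 1, …, ω q N` with binary reward `1[sample ∈ Sol q]`:
`PG_q(s) = (1/N) Σᵢ 1[ω q i ∈ Sol q] · (1[ω q i = s] − μ(s|q))`. -/
noncomputable def empiricalPG {Q S : Type*} [Fintype S] [DecidableEq S]
    (μ : S → Q → ℝ) (Sol : Q → Finset S) (N : ℕ)
    (ω : Q → Fin N → S) (q : Q) (s : S) : ℝ :=
  (1 / (N : ℝ)) * ∑ i : Fin N,
    (if ω q i ∈ Sol q then (1 : ℝ) else 0) *
    ((if ω q i = s then (1 : ℝ) else 0) - μ s q)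

/-! With `N ≥ log (100 |Q|) / δ'` hint-conditioned samples, a question misses all of its
solutions with probability at most `(1 - δ')^N ≤ 1 / (100 |Q|)`, so by a union bound every
question has a sampled solution with probability at least `0.99`.

On that event, with `r > 0` the fraction of sampled solutions, the empirical policy gradient
equals `-r μ(s|q) < 0` off `𝒮(q)` and sums to `r (1 - μ(𝒮(q)|q)) > 0` over `𝒮(q)`. Hence some
solution carries the largest coordinate, and along `θ + η PG` the softmax mass of `𝒮(q)` tends
to `1` as `η → ∞`; finitely many questions allow a common `η`. -/

open MeasureTheory Filter Topology Real

theorem mul_exp_neg_le_of_log_div_le {c ε t : ℝ} (hc : 0 ≤ c) (hε : 0 < ε) (ht : log (c / ε) ≤ t) :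
    c * exp (-t) ≤ ε := by
  rcases hc.eq_or_lt with rfl | hc
  · simpa using hε.le
  calc c * exp (-t) ≤ c * exp (-log (c / ε)) := by gcongr
    _ = ε := by rw [exp_neg, exp_log (div_pos hc hε)]; field_simp

theorem one_sub_pow_le_exp_neg_mul {p : ℝ} (hp : p ≤ 1) (N : ℕ) : (1 - p) ^ N ≤ exp (-(p * N)) := by
  calc (1 - p) ^ N ≤ exp (-p) ^ N := pow_le_pow_left₀ (sub_nonneg.2 hp) (one_sub_le_exp_neg p) N
    _ = exp (-(p * N)) := by rw [← exp_nat_mul]; ring_nf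

theorem tendsto_softmax_mass_atTop {S : Type*} [Fintype S] [DecidableEq S] (f g : S → ℝ)
    (A : Finset S) {s₀ : S} (hg : ∀ s ∉ A, g s < g s₀) :
    Tendsto (fun η => (∑ s ∈ A, exp (f s + η * g s)) / ∑ s, exp (f s + η * g s))
      atTop (𝓝 1) := by
  set w : ℝ → S → ℝ := fun η s => exp (f s + η * g s)
  have hZ : ∀ η, 0 < ∑ s, w η s := fun η =>
    Finset.sum_pos (fun s _ => exp_pos _) ⟨s₀, Finset.mem_univ _⟩
  have hle : ∀ η, 1 - (∑ s ∈ A, w η s) / ∑ s, w η s ≤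
      ∑ s ∈ Aᶜ, exp (f s - f s₀ + η * (g s - g s₀)) := fun η => by
    calc 1 - (∑ s ∈ A, w η s) / ∑ s, w η s = (∑ s ∈ Aᶜ, w η s) / ∑ s, w η s := by
          rw [eq_div_iff (hZ η).ne', sub_mul, one_mul, div_mul_cancel₀ _ (hZ η).ne',
            ← Finset.sum_add_sum_compl A (w η)]
          ring
      _ ≤ (∑ s ∈ Aᶜ, w η s) / w η s₀ :=
          div_le_div_of_nonneg_left (Finset.sum_nonneg fun s _ => (exp_pos _).le) (exp_pos _)
            (Finset.single_le_sum (f := w η) (fun s _ => (exp_pos _).le) (Finset.mem_univ s₀))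
      _ = ∑ s ∈ Aᶜ, exp (f s - f s₀ + η * (g s - g s₀)) := by
          rw [Finset.sum_div]
          refine Finset.sum_congr rfl fun s _ => ?_
          rw [← exp_sub]
          ring_nf
  have hdecay :
      Tendsto (fun η => ∑ s ∈ Aᶜ, exp (f s - f s₀ + η * (g s - g s₀))) atTop (𝓝 0) := by
    rw [← Finset.sum_const_zero]
    refine tendsto_finsetSum _ fun s hs => tendsto_exp_atBot.comp ?_
    exact tendsto_atBot_add_const_left _ _
      (tendsto_id.atTop_mul_const_of_neg (sub_neg.2 (hg s (Finset.mem_compl.1 hs))))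
  have hnonneg : ∀ η, 0 ≤ 1 - (∑ s ∈ A, w η s) / ∑ s, w η s := fun η => by
    rw [sub_nonneg, div_le_one (hZ η)]
    exact Finset.sum_le_sum_of_subset_of_nonneg (Finset.subset_univ A) fun s _ _ =>
      (exp_pos _).le
  have := tendsto_of_tendsto_of_tendsto_of_le_of_le tendsto_const_nhds hdecay hnonneg hle
  simpa using (tendsto_const_nhds (x := (1 : ℝ))).sub this

theorem exists_pos_forall_softmax_mass_ge {Q S : Type*} [Finite Q] [Fintype S] [DecidableEq S]
    (f g : Q → S → ℝ) (A : Q → Finset S) (hg : ∀ q, ∃ s₀, ∀ s ∉ A q, g q s < g q s₀)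
    {c : ℝ} (hc : c < 1) :
    ∃ η > 0, ∀ q, c ≤ (∑ s ∈ A q, exp (f q s + η * g q s)) / ∑ s, exp (f q s + η * g q s) := by
  have hlarge : ∀ q, ∀ᶠ η in atTop,
      c ≤ (∑ s ∈ A q, exp (f q s + η * g q s)) / ∑ s, exp (f q s + η * g q s) := fun q =>
    (tendsto_softmax_mass_atTop (f q) (g q) (A q) (hg q).choose_spec).eventually
      (eventually_ge_nhds hc)
  exact ((eventually_gt_atTop 0).and (eventually_all.2 hlarge)).exists

section PolicyGradient

variable {Q S : Type*} [DecidableEq S] (μ : S → Q → ℝ) (Sol : Q → Finset S)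
  {N : ℕ} (ω : Q → Fin N → S) (q : Q)

noncomputable def successRate : ℝ :=
  (1 / (N : ℝ)) * ∑ i : Fin N, if ω q i ∈ Sol q then (1 : ℝ) else 0

variable {Sol ω q} in
theorem successRate_pos (h : ∃ i, ω q i ∈ Sol q) : 0 < successRate Sol ω q := by
  obtain ⟨i, hi⟩ := h
  have hN : (0 : ℝ) < N := Nat.cast_pos.2 (Fin.pos i)
  have : (1 : ℝ) ≤ ∑ j : Fin N, if ω q j ∈ Sol q then (1 : ℝ) else 0 := by
    simpa [hi] using Finset.single_le_sum (f := fun j => if ω q j ∈ Sol q then (1 : ℝ) else 0)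
      (fun j _ => by positivity) (Finset.mem_univ i)
  unfold successRate
  positivity

variable [Fintype S]

theorem empiricalPG_of_notMem {s : S} (hs : s ∉ Sol q) :
    empiricalPG μ Sol N ω q s = -(successRate Sol ω q * μ s q) := by
  have hterm : ∀ i, (if ω q i ∈ Sol q then (1 : ℝ) else 0) * ((if ω q i = s then 1 else 0) - μ s q)
      = -((if ω q i ∈ Sol q then 1 else 0) * μ s q) := fun i => by
    by_cases hi : ω q i = s
    · simp [hi, hs]
    · simp [hi]
  simp only [empiricalPG, successRate, hterm, Finset.sum_neg_distrib, ← Finset.sum_mul]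
  ring

theorem sum_empiricalPG :
    ∑ s ∈ Sol q, empiricalPG μ Sol N ω q s = successRate Sol ω q * (1 - ∑ s ∈ Sol q, μ s q) := by
  have hterm : ∀ i, ∑ s ∈ Sol q, (if ω q i ∈ Sol q then (1 : ℝ) else 0) *
      ((if ω q i = s then 1 else 0) - μ s q) =
        (if ω q i ∈ Sol q then 1 else 0) * (1 - ∑ s ∈ Sol q, μ s q) := fun i => by
    rw [← Finset.mul_sum, Finset.sum_sub_distrib, Finset.sum_ite_eq]
    split_ifs <;> simp
  simp only [empiricalPG, successRate, ← Finset.mul_sum]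
  rw [Finset.sum_comm]
  simp only [hterm, ← Finset.sum_mul]
  ring

variable {μ Sol ω q} in
theorem exists_forall_notMem_empiricalPG_lt (hμ : ∀ s ∉ Sol q, 0 < μ s q)
    (hSol : ∑ s ∈ Sol q, μ s q < 1) (hω : ∃ i, ω q i ∈ Sol q) :
    ∃ s₀, ∀ s ∉ Sol q, empiricalPG μ Sol N ω q s < empiricalPG μ Sol N ω q s₀ := by
  have hrate := successRate_pos hω
  have hsum : ∑ s ∈ Sol q, (0 : ℝ) < ∑ s ∈ Sol q, empiricalPG μ Sol N ω q s := by
    rw [sum_empiricalPG, Finset.sum_const_zero]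
    exact mul_pos hrate (sub_pos.2 hSol)
  obtain ⟨s₀, -, hs₀⟩ := Finset.exists_lt_of_sum_lt hsum
  refine ⟨s₀, fun s hs => ?_⟩
  rw [empiricalPG_of_notMem μ Sol ω q hs]
  linarith [mul_pos hrate (hμ s hs)]

end PolicyGradient

theorem MeasurableSpace.pi_mono {ι : Type*} {α : ι → Type*} {m m₀ : ∀ i, MeasurableSpace (α i)}
    (h : ∀ i, m i ≤ m₀ i) : @MeasurableSpace.pi ι α m ≤ @MeasurableSpace.pi ι α m₀ :=
  iSup_mono fun i => MeasurableSpace.comap_mono (h i)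

theorem PMF.toMeasure_eq_trim {α : Type*} {m m₀ : MeasurableSpace α} (h : m ≤ m₀) (p : PMF α) :
    @PMF.toMeasure α m p = (@PMF.toMeasure α m₀ p).trim h :=
  @Measure.ext α m _ _ fun s hs => by
    rw [trim_measurableSet_eq h hs, @PMF.toMeasure_apply _ m _ _ hs,
      @PMF.toMeasure_apply _ m₀ _ _ (h s hs)]

theorem MeasureTheory.Measure.pi_trim {ι : Type*} [Fintype ι] {α : ι → Type*}
    {m m₀ : ∀ i, MeasurableSpace (α i)} (h : ∀ i, m i ≤ m₀ i) (μ : ∀ i, @Measure (α i) (m₀ i))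
    [hμ : ∀ i, IsFiniteMeasure (μ i)] :
    @Measure.pi ι α _ m (fun i => (μ i).trim (h i)) =
      (@Measure.pi ι α _ m₀ μ).trim (MeasurableSpace.pi_mono h) := by
  have : ∀ i, SigmaFinite ((μ i).trim (h i)) := fun i => inferInstance
  refine @Measure.pi_eq ι α _ m _ _ _ fun s hs => ?_
  rw [trim_measurableSet_eq _ (@MeasurableSet.univ_pi ι α m _ s hs), Measure.pi_pi]
  exact Finset.prod_congr rfl fun i _ => (trim_measurableSet_eq (h i) (hs i)).symm

/-- For an arbitrary σ-algebra on `S` the sampling event need not be measurable. The sampling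
measure is the trim of the one built on the discrete σ-algebra, hence dominates it on every set. -/
theorem PMF.measure_pi_pi_toMeasure_top_le {ι κ S : Type*} [Fintype ι] [Fintype κ]
    [mS : MeasurableSpace S]
    (ν : ι → PMF S) (A : Set (ι → κ → S)) :
    @Measure.pi ι (fun _ => κ → S) _ (fun _ => @MeasurableSpace.pi κ (fun _ => S) fun _ => ⊤)
        (fun i => @Measure.pi κ (fun _ => S) _ (fun _ => ⊤) fun _ => @PMF.toMeasure S ⊤ (ν i)) A ≤
      Measure.pi (fun i => Measure.pi fun _ : κ => (ν i).toMeasure) A := by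
  have hS : mS ≤ ⊤ := le_top
  have inner : ∀ i, Measure.pi (fun _ : κ => (ν i).toMeasure) =
      (@Measure.pi κ (fun _ => S) _ (fun _ => ⊤) fun _ => @PMF.toMeasure S ⊤ (ν i)).trim
        (MeasurableSpace.pi_mono fun _ => hS) := fun i => by
    simp_rw [PMF.toMeasure_eq_trim hS]
    exact Measure.pi_trim (fun _ => hS) _ (hμ := fun _ => inferInstance)
  simp_rw [inner]
  rw [Measure.pi_trim (fun _ => MeasurableSpace.pi_mono fun _ => hS)
    (fun i => @Measure.pi κ (fun _ => S) _ (fun _ => ⊤) fun _ => @PMF.toMeasure S ⊤ (ν i))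
    (hμ := fun _ => inferInstance)]
  exact le_trim _

theorem measureReal_pi_forall_notMem {α : Type*} [MeasurableSpace α] (μ : Measure α)
    [IsProbabilityMeasure μ] {B : Set α} (hB : MeasurableSet B) (N : ℕ) :
    (Measure.pi fun _ : Fin N => μ).real {x | ∀ n, x n ∉ B} = (1 - μ.real B) ^ N := by
  have : {x : Fin N → α | ∀ n, x n ∉ B} = Set.univ.pi fun _ => Bᶜ := by ext; simp
  rw [this, measureReal_def, Measure.pi_pi, ENNReal.toReal_prod, Finset.prod_const,
    Finset.card_univ, Fintype.card_fin, ← measureReal_def, probReal_compl_eq_one_sub hB]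

theorem one_sub_sum_le_measureReal_pi_forall_exists_mem {ι α : Type*} [Fintype ι]
    [MeasurableSpace α] (μ : ι → Measure α) [∀ i, IsProbabilityMeasure (μ i)] {B : ι → Set α}
    (hB : ∀ i, MeasurableSet (B i)) (N : ℕ) :
    1 - ∑ i, (1 - (μ i).real (B i)) ^ N ≤
      (Measure.pi fun i => Measure.pi fun _ : Fin N => μ i).real {ω | ∀ i, ∃ n, ω i n ∈ B i} := by
  set P := Measure.pi fun i => Measure.pi fun _ : Fin N => μ i
  have hF : ∀ i, MeasurableSet {x : Fin N → α | ∀ n, x n ∉ B i} := fun i => by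
    simp_rw [Set.ofPred_forall]
    exact .iInter fun n => (hB i).compl.preimage (measurable_pi_apply n)
  have hcompl : {ω : ι → Fin N → α | ∀ i, ∃ n, ω i n ∈ B i}ᶜ =
      ⋃ i, Function.eval i ⁻¹' {x | ∀ n, x n ∉ B i} := by ext; simp
  have hunion : P.real {ω | ∀ i, ∃ n, ω i n ∈ B i}ᶜ ≤ ∑ i, (1 - (μ i).real (B i)) ^ N := by
    rw [hcompl]
    refine (measureReal_iUnion_fintype_le _).trans (Finset.sum_le_sum fun i _ => ?_)
    rw [measureReal_def, (measurePreserving_eval _ i).measure_preimage (hF i).nullMeasurableSet,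
      ← measureReal_def, measureReal_pi_forall_notMem _ (hB i)]
  have hcover : 1 ≤ P.real {ω | ∀ i, ∃ n, ω i n ∈ B i} + P.real {ω | ∀ i, ∃ n, ω i n ∈ B i}ᶜ := by
    rw [← probReal_univ (μ := P), ← Set.union_compl_self]
    exact measureReal_union_le _ _
  linarith

theorem PMF.one_sub_le_measureReal_pi_forall_exists_mem {Q S : Type*} [Fintype Q]
    [MeasurableSpace S]
    (ν : Q → PMF S) (B : Q → Set S) {δ ε : ℝ} (hε : 0 < ε)
    (hB : ∀ q, ∃ s ∈ B q, δ ≤ (ν q s).toReal) {N : ℕ}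
    (hN : log (Fintype.card Q / ε) ≤ δ * N) :
    1 - ε ≤ (Measure.pi fun q => Measure.pi fun _ : Fin N => (ν q).toMeasure).real
      {ω | ∀ q, ∃ n, ω q n ∈ B q} := by
  have hmass : ∀ q, δ ≤ (@PMF.toMeasure S ⊤ (ν q)).real (B q) := fun q => by
    obtain ⟨s, hs, hδs⟩ := hB q
    calc δ ≤ (ν q s).toReal := hδs
      _ = (@PMF.toMeasure S ⊤ (ν q)).real {s} := by
        rw [measureReal_def,
          @PMF.toMeasure_apply_singleton S ⊤ _ _ MeasurableSpace.measurableSet_top]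
      _ ≤ _ := measureReal_mono (Set.singleton_subset_iff.2 hs)
  have htail : ∑ q, (1 - (@PMF.toMeasure S ⊤ (ν q)).real (B q)) ^ N ≤ ε :=
    calc ∑ q, (1 - (@PMF.toMeasure S ⊤ (ν q)).real (B q)) ^ N ≤ ∑ _q : Q, exp (-(δ * N)) :=
          Finset.sum_le_sum fun q _ => (one_sub_pow_le_exp_neg_mul measureReal_le_one N).trans
            (exp_le_exp.2 (neg_le_neg (mul_le_mul_of_nonneg_right (hmass q) (Nat.cast_nonneg N))))
      _ = Fintype.card Q * exp (-(δ * N)) := by simp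
      _ ≤ ε := mul_exp_neg_le_of_log_div_le (Nat.cast_nonneg _) hε hN
  calc 1 - ε ≤ 1 - ∑ q, (1 - (@PMF.toMeasure S ⊤ (ν q)).real (B q)) ^ N := by linarith
    _ ≤ _ := @one_sub_sum_le_measureReal_pi_forall_exists_mem Q S _ ⊤
          (fun q => @PMF.toMeasure S ⊤ (ν q))
          (fun q => @PMF.toMeasure.isProbabilityMeasure S ⊤ (ν q))
          B (fun q => MeasurableSpace.measurableSet_top) N
    _ ≤ _ := ENNReal.toReal_mono (measure_ne_top _ _) (PMF.measure_pi_pi_toMeasure_top_le ν _)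

theorem rl_upper_bound_with_hint_general
    (Q S : Type*) [Fintype Q] [Nonempty Q]
    [Fintype S] [DecidableEq S] [MeasurableSpace S]
    (θ : S × Q → ℝ)
    (μ : S → Q → ℝ)
    (hμ : ∀ s q, μ s q = Real.exp (θ (s, q)) / ∑ s' : S, Real.exp (θ (s', q)))
    (δ' : ℝ) (hδ0 : 0 < δ')
    (Sol hint : Q → Finset S)
    (hSol : ∀ q, ∑ s ∈ Sol q, μ s q < 1)
    (hhintMass : ∀ q, δ' ≤ ∑ s ∈ hint q, μ s q)
    (sq : Q → S) (hsq : ∀ q, sq q ∈ hint q ∩ Sol q)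
    (hsqMass : ∀ q, μ (sq q) q ≥ δ' * ∑ s ∈ hint q, μ s q)
    (ν : Q → PMF S)
    (hν : ∀ q s, ((ν q) s).toReal =
      if s ∈ hint q then μ s q / ∑ s' ∈ hint q, μ s' q else 0)
    (N : ℕ)
    (hN : (N : ℝ) ≥ Real.log (100 * (Fintype.card Q : ℝ)) / δ') :
    ((MeasureTheory.Measure.pi fun q : Q =>
        MeasureTheory.Measure.pi fun _ : Fin N => (ν q).toMeasure)
      {ω : Q → Fin N → S |
        (∀ q, ∃ i, ω q i ∈ Sol q) ∧
        ∃ η > (0 : ℝ),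
          (∀ q, (∑ s ∈ Sol q,
              Real.exp (θ (s, q) + η * empiricalPG μ Sol N ω q s) /
                ∑ s' : S, Real.exp (θ (s', q) + η * empiricalPG μ Sol N ω q s'))
            ≥ 0.99) ∧
          (1 / (Fintype.card Q : ℝ)) * ∑ q : Q, ∑ s ∈ Sol q,
              Real.exp (θ (s, q) + η * empiricalPG μ Sol N ω q s) /
                ∑ s' : S, Real.exp (θ (s', q) + η * empiricalPG μ Sol N ω q s')
            ≥ 0.99}).toReal ≥ 0.99 := by
  have hμpos : ∀ s q, 0 < μ s q := fun s q => by
    rw [hμ]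
    exact div_pos (exp_pos _) (Finset.sum_pos (fun _ _ => exp_pos _) ⟨s, Finset.mem_univ _⟩)
  have hνsq : ∀ q, δ' ≤ (ν q (sq q)).toReal := fun q => by
    have hhint : 0 < ∑ s ∈ hint q, μ s q := hδ0.trans_le (hhintMass q)
    rw [hν, if_pos (Finset.mem_inter.1 (hsq q)).1, le_div_iff₀ hhint]
    exact hsqMass q
  have hN' : log (Fintype.card Q / (1 / 100)) ≤ δ' * N := by
    rw [ge_iff_le, div_le_iff₀ hδ0] at hN
    rwa [div_div_eq_mul_div, div_one, mul_comm, mul_comm δ']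
  have hsampled := PMF.one_sub_le_measureReal_pi_forall_exists_mem ν (fun q => ↑(Sol q))
    (by norm_num) (fun q => ⟨sq q, (Finset.mem_inter.1 (hsq q)).2, hνsq q⟩) hN'
  refine le_trans (by norm_num) (hsampled.trans (measureReal_mono fun ω hω => ⟨hω, ?_⟩))
  obtain ⟨η, hη, hmass⟩ := exists_pos_forall_softmax_mass_ge (fun q s => θ (s, q))
    (empiricalPG μ Sol N ω) Sol
    (fun q => exists_forall_notMem_empiricalPG_lt (fun s _ => hμpos s q) (hSol q) (hω q))
    (by norm_num : (0.99 : ℝ) < 1)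
  simp only [← Finset.sum_div]
  refine ⟨η, hη, hmass, ?_⟩
  have hcard : (0 : ℝ) < Fintype.card Q := Nat.cast_pos.2 Fintype.card_pos
  rw [ge_iff_le, one_div, le_inv_mul_iff₀ hcard]
  simpa using Finset.card_nsmul_le_sum Finset.univ _ _ fun q _ => hmass q

/-- Theorem B.3, formal Upper Bound on RL Learnability with Hint.
Tabular RL with softmax policy `μ_θ(s|q) = exp(θ_{s,q})/Σ_{s'} exp(θ_{s',q})`; each
question `q` has a solution set `𝒮(q)` of policy mass `< 1`, a hint set `h_q` of mass
`≥ δ'` containing a solution `s_q ∈ h_q ∩ 𝒮(q)` with `μ_θ(s_q|q) ≥ δ'·μ_θ(h_q|q)`.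
Drawing `N ≥ ln(100·|Q|)/δ'` i.i.d. samples per question from the hint-conditioned
policy (independently across questions), with probability at least `0.99`: every
question has a sampled solution, and a single policy-gradient step
`θ' = θ + η·PG` with some step size `η > 0` puts mass `≥ 0.99` on `𝒮(q)` for every
`q`, whence `E_{q∼Uniform(Q)}[P_{s∼μ_{θ'}(·|q)}(s ∈ 𝒮(q))] ≥ 0.99`. -/
theorem rl_upper_bound_with_hint
    (Q S : Type*) [Fintype Q] [Nonempty Q]
    [Fintype S] [Nonempty S] [DecidableEq S] [MeasurableSpace S]
    (θ : S × Q → ℝ)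
    (μ : S → Q → ℝ)
    (hμ : ∀ s q, μ s q = Real.exp (θ (s, q)) / ∑ s' : S, Real.exp (θ (s', q)))
    (δ' : ℝ) (hδ0 : 0 < δ') (hδ1 : δ' ≤ 1)
    (Sol hint : Q → Finset S)
    (hSol : ∀ q, ∑ s ∈ Sol q, μ s q < 1)
    (hhintMass : ∀ q, δ' ≤ ∑ s ∈ hint q, μ s q)
    (sq : Q → S) (hsq : ∀ q, sq q ∈ hint q ∩ Sol q)
    (hsqMass : ∀ q, μ (sq q) q ≥ δ' * ∑ s ∈ hint q, μ s q)
    (ν : Q → PMF S)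
    (hν : ∀ q s, ((ν q) s).toReal =
      if s ∈ hint q then μ s q / ∑ s' ∈ hint q, μ s' q else 0)
    (N : ℕ)
    (hN : (N : ℝ) ≥ Real.log (100 * (Fintype.card Q : ℝ)) / δ') :
    ((MeasureTheory.Measure.pi fun q : Q =>
        MeasureTheory.Measure.pi fun _ : Fin N => (ν q).toMeasure)
      {ω : Q → Fin N → S |
        (∀ q, ∃ i, ω q i ∈ Sol q) ∧
        ∃ η > (0 : ℝ),
          (∀ q, (∑ s ∈ Sol q,
              Real.exp (θ (s, q) + η * empiricalPG μ Sol N ω q s) /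
                ∑ s' : S, Real.exp (θ (s', q) + η * empiricalPG μ Sol N ω q s'))
            ≥ 0.99) ∧
          (1 / (Fintype.card Q : ℝ)) * ∑ q : Q, ∑ s ∈ Sol q,
              Real.exp (θ (s, q) + η * empiricalPG μ Sol N ω q s) /
                ∑ s' : S, Real.exp (θ (s', q) + η * empiricalPG μ Sol N ω q s')
            ≥ 0.99}).toReal ≥ 0.99 :=
  rl_upper_bound_with_hint_general Q S θ μ hμ δ' hδ0 Sol hint hSol hhintMass sq hsq hsqMass ν hν N
    hN
end
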